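/- For every s ∈ (0, s*), let α(s) = (y_min + s, √b·s) and β(s) = (y_min, ((b+1)/√b)·s), and define the affine function T_s : ℝ² → ℝ by T_s(y) = f^(r₀)(α(s)) + ⟨α(s), y − α(s)⟩ (the tangent plane of f^(r₀) at α(s), whose gradient at α(s) equals α(s)). Then T_s(β(s)) = f^(r₀)(β(s)) and T_s(y) ≤ f^(r₀)(y) for all y ∈ ℝ². -/
import Mathlib


/-- The condensed energy `f^(r)` associated with the dissipation function `r`
and the hardening parameter `b`. -/
noncomputable def condensed (b : ℝ) (r : ℝ → ℝ) (y : ℝ × ℝ) : ℝ :=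
  (1 / 2) * (y.1 ^ 2 + y.2 ^ 2) - (max (|y.2| - r y.1) 0) ^ 2 / (2 * (b + 1))

/-- The piecewise affine dissipation function `r₀`. -/
noncomputable def r0 (b ymin ymax : ℝ) (t : ℝ) : ℝ :=
  if t ∈ Set.Icc ymin ymax then
    Real.sqrt b * ((ymax - ymin) / 2 - |t - (ymin + ymax) / 2|)
  else 0

theorem stmt_10 (b ymin ymax : ℝ) (hb : 0 < b) (hy : ymin < ymax)
    (sstar : ℝ) (hs : sstar = (ymax - ymin) / 2) :
    ∀ s ∈ Set.Ioo (0 : ℝ) sstar,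
      ∀ (α β : ℝ × ℝ) (Ts : ℝ × ℝ → ℝ),
        α = (ymin + s, Real.sqrt b * s) →
        β = (ymin, ((b + 1) / Real.sqrt b) * s) →
        (∀ y : ℝ × ℝ, Ts y = condensed b (r0 b ymin ymax) α
            + (α.1 * (y.1 - α.1) + α.2 * (y.2 - α.2))) →
        Ts β = condensed b (r0 b ymin ymax) β ∧
        ∀ y : ℝ × ℝ, Ts y ≤ condensed b (r0 b ymin ymax) y := by
  intro s hsmem α β Ts hα hβ hTs
  subst hα hβ hs
  obtain ⟨hs0, hs1⟩ := hsmem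
  set σ := Real.sqrt b with hσdef
  have hσpos : 0 < σ := Real.sqrt_pos.mpr hb
  have hσsq : σ ^ 2 = b := Real.sq_sqrt hb.le
  -- r0 at α.1
  have hmem : ymin + s ∈ Set.Icc ymin ymax := ⟨by linarith, by linarith⟩
  have habs : |ymin + s - (ymin + ymax) / 2| = (ymax - ymin) / 2 - s := by
    rw [abs_of_nonpos (by linarith)]; ring
  have hrα : r0 b ymin ymax (ymin + s) = σ * s := by
    rw [r0, if_pos hmem, habs]; ring
  have hcα : condensed b (r0 b ymin ymax) (ymin + s, σ * s)
      = (1 / 2) * ((ymin + s) ^ 2 + (σ * s) ^ 2) := by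
    rw [condensed]
    simp only
    rw [hrα, abs_of_nonneg (by positivity)]
    simp
  -- Lipschitz lower bound for r0
  have hlip : ∀ t : ℝ, σ * s - σ * |t - (ymin + s)| ≤ r0 b ymin ymax t := by
    intro t
    rw [r0]
    split_ifs with h
    · have h1 : |t - (ymin + ymax) / 2| - ((ymax - ymin) / 2 - s)
          ≤ |t - (ymin + s)| := by
        have h2 := abs_sub_abs_le_abs_sub (t - (ymin + ymax) / 2) (t - (ymin + s))
        have h3 : |t - (ymin + ymax) / 2 - (t - (ymin + s))|
            = (ymax - ymin) / 2 - s := by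
          rw [show t - (ymin + ymax) / 2 - (t - (ymin + s))
              = -((ymax - ymin) / 2 - s) by ring, abs_neg,
            abs_of_nonneg (by linarith)]
        linarith
      nlinarith [hσpos]
    · have hout : t < ymin ∨ ymax < t := by
        by_contra hc
        push_neg at hc
        exact h (Set.mem_Icc.mpr ⟨hc.1, hc.2⟩)
      have h1 : s ≤ |t - (ymin + s)| := by
        rcases hout with h' | h'
        · rw [abs_of_nonpos (by linarith)]; linarith
        · rw [abs_of_nonneg (by linarith)]; linarith
      nlinarith [hσpos]
  constructor
  · -- equality at β
    rw [hTs, hcα]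
    have hr0min : r0 b ymin ymax ymin = 0 := by
      rw [r0, if_pos ⟨le_refl _, hy.le⟩,
        show |ymin - (ymin + ymax) / 2| = -(ymin - (ymin + ymax) / 2) from
          abs_of_nonpos (by linarith)]
      ring
    have hβ2 : (0 : ℝ) ≤ (b + 1) / σ * s := by positivity
    rw [condensed]
    simp only
    rw [hr0min, sub_zero, abs_of_nonneg hβ2, max_eq_left (by positivity)]
    have hσne : σ ≠ 0 := ne_of_gt hσpos
    have hbne : b ≠ 0 := ne_of_gt hb
    rw [← hσsq]
    field_simp
    ring
  · -- global inequality
    intro y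
    rw [hTs, hcα]
    set m := max (|y.2| - r0 b ymin ymax y.1) 0 with hm
    have hm0 : 0 ≤ m := le_max_right _ _
    have hmle : m ≤ |y.2 - σ * s| + σ * |y.1 - (ymin + s)| := by
      apply max_le _ (by positivity)
      have h1 : |y.2| - σ * s ≤ |y.2 - σ * s| := by
        have := abs_sub_abs_le_abs_sub y.2 (σ * s)
        rw [abs_of_nonneg (by positivity : (0:ℝ) ≤ σ * s)] at this
        linarith
      have h2 := hlip y.1
      linarith
    have hkey : m ^ 2 ≤ (b + 1) * ((y.1 - (ymin + s)) ^ 2 + (y.2 - σ * s) ^ 2) := by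
      have ha := abs_nonneg (y.2 - σ * s)
      have hc := abs_nonneg (y.1 - (ymin + s))
      have hsa := sq_abs (y.2 - σ * s)
      have hsc := sq_abs (y.1 - (ymin + s))
      nlinarith [sq_nonneg (σ * |y.2 - σ * s| - |y.1 - (ymin + s)|), hσsq, hm0,
        mul_nonneg ha hc]
    have hdiv : m ^ 2 / (2 * (b + 1))
        ≤ ((y.1 - (ymin + s)) ^ 2 + (y.2 - σ * s) ^ 2) / 2 := by
      rw [div_le_div_iff₀ (by linarith) (by norm_num)]
      nlinarith [hkey]
    rw [condensed]
    simp only [← hm]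
    have hexp : (1 / 2) * (y.1 ^ 2 + y.2 ^ 2)
        - ((1 / 2) * ((ymin + s) ^ 2 + (σ * s) ^ 2)
          + ((ymin + s) * (y.1 - (ymin + s)) + σ * s * (y.2 - σ * s)))
        = ((y.1 - (ymin + s)) ^ 2 + (y.2 - σ * s) ^ 2) / 2 := by ring
    linarith [hdiv, hexp]
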